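/- arXiv:math/0412216 — 2 statements merged into one kernel-verified Lean document; each statement's English description precedes it below -/
import Mathlib

section
/- Let A = [[1,1],[0,1]] and B = [[1,0],[-1,1]] in SL(2,ℤ). Then A^8 * (A⁻² * B * A²) * B^2 * (A² * B * A⁻²) = 1. -/
/-- The right-handed Dehn twist `a` as the matrix [[1,1],[0,1]] in SL(2,ℤ). -/
def A : Matrix.SpecialLinearGroup (Fin 2) ℤ :=
  ⟨!![1, 1; 0, 1], by norm_num [Matrix.det_fin_two_of]⟩

/-- The right-handed Dehn twist `b` as the matrix [[1,0],[-1,1]] in SL(2,ℤ). -/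
def B : Matrix.SpecialLinearGroup (Fin 2) ℤ :=
  ⟨!![1, 0; -1, 1], by norm_num [Matrix.det_fin_two_of]⟩

lemma Ainv : A⁻¹ = ⟨!![1, -1; 0, 1], by norm_num [Matrix.det_fin_two_of]⟩ := by
  apply inv_eq_of_mul_eq_one_right
  ext i j
  fin_cases i <;> fin_cases j <;>
    simp [A, Matrix.SpecialLinearGroup.coe_mul, Matrix.mul_apply, Fin.sum_univ_two] <;> rfl

theorem stmt_6 : A ^ 8 * (A⁻¹ ^ 2 * B * A ^ 2) * B ^ 2 * (A ^ 2 * B * A⁻¹ ^ 2) = 1 := by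
  rw [Ainv]
  ext i j
  fin_cases i <;> fin_cases j <;>
    simp [A, B, pow_succ, Matrix.SpecialLinearGroup.coe_mul, Matrix.mul_apply,
      Fin.sum_univ_two] <;> rfl
end

section
/- Let A = [[1,1],[0,1]] and B = [[1,0],[-1,1]] in SL(2,ℤ). Then (A^3*B)^3 = A^6 * (A⁻³ * B * A³) * B^2 * (B⁻¹ * A * B)^3, hence A^6 * (A⁻³ * B * A³) * B^2 * (B⁻¹ * A * B)^3 = 1. -/
theorem stmt_7 :
    (A ^ 3 * B) ^ 3 = A ^ 6 * (A⁻¹ ^ 3 * B * A ^ 3) * B ^ 2 * (B⁻¹ * A * B) ^ 3 ∧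
    A ^ 6 * (A⁻¹ ^ 3 * B * A ^ 3) * B ^ 2 * (B⁻¹ * A * B) ^ 3 = 1 := by
  have h1 : (A ^ 3 * B) ^ 3 = A ^ 6 * (A⁻¹ ^ 3 * B * A ^ 3) * B ^ 2 * (B⁻¹ * A * B) ^ 3 := by
    have h2 : (B⁻¹ * A * B) ^ 3 = B⁻¹ * A ^ 3 * B := by
      simp [pow_succ, mul_assoc]
    rw [h2]; simp [pow_succ, mul_assoc]
  refine ⟨h1, h1 ▸ ?_⟩
  ext i j
  fin_cases i <;> fin_cases j <;>
    simp [Matrix.SpecialLinearGroup.coe_pow, Matrix.SpecialLinearGroup.coe_mul] <;>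
    simp [A, B, pow_succ, Matrix.SpecialLinearGroup.coe_mul, Matrix.mul_apply,
      Fin.sum_univ_succ]
end
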